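/- (Theorem 2(B).) Let Δ = π/4 or Δ = −3π/4, let Ũ be the 4-state LQW time evolution with coin matrix M̃(Δ), and let the initial state be ψ₀(x) = (φ₁, φ₂, φ₃, φ₄)ᵀ·δ₀(x). Set j = 0 if Δ = π/4 and j = 1 if Δ = −3π/4. Then for every m ∈ ℤ≥0 and x ∈ ℤ: (Ũ^{4m}ψ₀)(x) = (φ₁,φ₂,φ₃,φ₄)ᵀ δ₀(x); (Ũ^{4m+1}ψ₀)(x) = ((−1)^j/2)·(φ₁+φ₂−φ₃+φ₄, 0, φ₁−φ₂−φ₃−φ₄, 0)ᵀ δ₋₁(x) + ((−1)^j/2)·(0, φ₁+φ₂+φ₃−φ₄, 0, −φ₁+φ₂−φ₃−φ₄)ᵀ δ₁(x); (Ũ^{4m+2}ψ₀)(x) = (1/2)·(φ₂+φ₄, 0, φ₂+φ₄, 0)ᵀ δ₋₂(x) + (1/2)·(φ₂−φ₄, φ₁−φ₃, φ₄−φ₂, φ₃−φ₁)ᵀ δ₀(x) + (1/2)·(0, φ₁+φ₃, 0, φ₁+φ₃)ᵀ δ₂(x); and (Ũ^{4m+3}ψ₀)(x) = ((−1)^j/2)·(φ₂−φ₄,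 φ₂+φ₄, φ₂−φ₄, −φ₂−φ₄)ᵀ δ₋₁(x) + ((−1)^j/2)·(φ₁+φ₃, φ₁−φ₃, −φ₁−φ₃, φ₁−φ₃)ᵀ δ₁(x). -/

import Mathlib

open Matrix Real

noncomputable section

/-- The coin matrix `M̃(Δ)` of the one-parameter family of 4-state Grover walks. -/
def MtildeGrover (Δ : ℝ) : Matrix (Fin 4) (Fin 4) ℂ :=
  ((Real.sqrt 2)⁻¹ : ℂ) •
    !![(Real.cos Δ : ℂ), (Real.sin Δ : ℂ), -(Real.cos Δ : ℂ), (Real.sin Δ : ℂ);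
       (Real.sin Δ : ℂ), (Real.cos Δ : ℂ), (Real.sin Δ : ℂ), -(Real.cos Δ : ℂ);
       (Real.sin Δ : ℂ), -(Real.cos Δ : ℂ), -(Real.sin Δ : ℂ), -(Real.cos Δ : ℂ);
       -(Real.cos Δ : ℂ), (Real.sin Δ : ℂ), -(Real.cos Δ : ℂ), -(Real.sin Δ : ℂ)]

/-- The time evolution of the 4-state LQW on `ℤ` with coin matrix `M`:
`(Ũψ)(x) = P̃·ψ(x+1) + Q̃·ψ(x−1)` where `P̃` retains rows 1 and 3 of `M` and `Q̃` retains
rows 2 and 4. -/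
def lqwU4 (M : Matrix (Fin 4) (Fin 4) ℂ) (ψ : ℤ → Fin 4 → ℂ) : ℤ → Fin 4 → ℂ := fun x =>
  (Matrix.of ![M 0, (0 : Fin 4 → ℂ), M 2, (0 : Fin 4 → ℂ)]).mulVec (ψ (x + 1))
    + (Matrix.of ![(0 : Fin 4 → ℂ), M 1, (0 : Fin 4 → ℂ), M 3]).mulVec (ψ (x - 1))

/-- `δ_{x₀}(x)`: `1` if `x = x₀` and `0` otherwise. -/
def dlt (x₀ x : ℤ) : ℂ := if x = x₀ then 1 else 0

/-!
At `Δ = π/4` both `cos Δ` and `sin Δ` equal `1/√2`, so the coin is `½` times a matrix of signs,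
and a direct computation shows that four steps of the walk bring `δ₀ φ` back to itself.
Since `Δ ↦ Δ - π` negates the coin and `-3π/4 = π/4 - π`, the other walk differs only by the
sign `(-1)ⁿ` at time `n`, which is `(-1)ʲ` at odd times and `1` at even ones.
-/

open Function

def groverCoin : Matrix (Fin 4) (Fin 4) ℂ :=
  (1 / 2 : ℂ) • !![1, 1, -1, 1; 1, 1, 1, -1; 1, -1, -1, -1; -1, 1, -1, -1]

lemma MtildeGrover_pi_div_four : MtildeGrover (π / 4) = groverCoin := by
  have h : ((√2 : ℝ) : ℂ)⁻¹ * ((√2 : ℝ) / 2) = 2⁻¹ := by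
    have : ((√2 : ℝ) : ℂ) ≠ 0 := by simp
    field_simp
  ext i j
  fin_cases i <;> fin_cases j <;> simp [MtildeGrover, groverCoin, h]

lemma MtildeGrover_sub_pi (Δ : ℝ) : MtildeGrover (Δ - π) = -MtildeGrover Δ := by
  ext i j
  fin_cases i <;> fin_cases j <;> simp [MtildeGrover, cos_sub_pi, sin_sub_pi]

lemma MtildeGrover_eq_neg_one_pow_smul {Δ : ℝ} {j : ℕ}
    (hΔ : (Δ = π / 4 ∧ j = 0) ∨ (Δ = -3 * π / 4 ∧ j = 1)) :
    MtildeGrover Δ = (-1 : ℂ) ^ j • groverCoin := by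
  rcases hΔ with ⟨rfl, rfl⟩ | ⟨rfl, rfl⟩
  · rw [pow_zero, one_smul, MtildeGrover_pi_div_four]
  · rw [show -3 * π / 4 = π / 4 - π by ring, MtildeGrover_sub_pi, MtildeGrover_pi_div_four,
      pow_one, neg_one_smul]

section Walk

variable (M : Matrix (Fin 4) (Fin 4) ℂ) (ψ : ℤ → Fin 4 → ℂ)

lemma lqwU4_apply (x : ℤ) :
    lqwU4 M ψ x = ![M 0 ⬝ᵥ ψ (x + 1), M 1 ⬝ᵥ ψ (x - 1), M 2 ⬝ᵥ ψ (x + 1), M 3 ⬝ᵥ ψ (x - 1)] := by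
  ext i
  fin_cases i <;> simp [lqwU4]

lemma lqwU4_smul_coin (c : ℂ) : lqwU4 (c • M) ψ = c • lqwU4 M ψ := by
  funext x
  simp only [lqwU4_apply, show ∀ i, (c • M) i = c • M i from fun _ => rfl, smul_dotProduct,
    Pi.smul_apply, smul_cons, smul_empty]

lemma lqwU4_smul (c : ℂ) : lqwU4 M (c • ψ) = c • lqwU4 M ψ := by
  funext x
  simp only [lqwU4_apply, Pi.smul_apply, dotProduct_smul, smul_cons, smul_empty]

lemma iterate_lqwU4_smul_coin (c : ℂ) (n : ℕ) :
    (lqwU4 (c • M))^[n] ψ = c ^ n • (lqwU4 M)^[n] ψ := by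
  induction n with
  | zero => simp
  | succ n ih =>
    rw [iterate_succ_apply', iterate_succ_apply', ih, lqwU4_smul_coin, lqwU4_smul, smul_smul,
      pow_succ']

end Walk

section Orbit

variable (φ₁ φ₂ φ₃ φ₄ : ℂ)

def groverState0 : ℤ → Fin 4 → ℂ := fun x => dlt 0 x • ![φ₁, φ₂, φ₃, φ₄]

def groverState1 : ℤ → Fin 4 → ℂ := fun x =>
  (1 / 2 : ℂ) •
    (dlt (-1) x • ![φ₁ + φ₂ - φ₃ + φ₄, 0, φ₁ - φ₂ - φ₃ - φ₄, 0]
      + dlt 1 x • ![0, φ₁ + φ₂ + φ₃ - φ₄, 0, -φ₁ + φ₂ - φ₃ - φ₄])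

def groverState2 : ℤ → Fin 4 → ℂ := fun x =>
  (1 / 2 : ℂ) •
    (dlt (-2) x • ![φ₂ + φ₄, 0, φ₂ + φ₄, 0]
      + dlt 0 x • ![φ₂ - φ₄, φ₁ - φ₃, φ₄ - φ₂, φ₃ - φ₁]
      + dlt 2 x • ![0, φ₁ + φ₃, 0, φ₁ + φ₃])

def groverState3 : ℤ → Fin 4 → ℂ := fun x =>
  (1 / 2 : ℂ) •
    (dlt (-1) x • ![φ₂ - φ₄, φ₂ + φ₄, φ₂ - φ₄, -φ₂ - φ₄]
      + dlt 1 x • ![φ₁ + φ₃, φ₁ - φ₃, -φ₁ - φ₃, φ₁ - φ₃])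

lemma lqwU4_groverState0 :
    lqwU4 groverCoin (groverState0 φ₁ φ₂ φ₃ φ₄) = groverState1 φ₁ φ₂ φ₃ φ₄ := by
  funext x
  simp only [lqwU4_apply, groverState0, groverState1, dlt]
  split_ifs <;> try omega
  all_goals ext i; fin_cases i <;> simp [dotProduct, Fin.sum_univ_four, groverCoin] <;> ring

lemma lqwU4_groverState1 :
    lqwU4 groverCoin (groverState1 φ₁ φ₂ φ₃ φ₄) = groverState2 φ₁ φ₂ φ₃ φ₄ := by
  funext x
  simp only [lqwU4_apply, groverState1, groverState2, dlt]
  split_ifs <;> try omega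
  all_goals ext i; fin_cases i <;> simp [dotProduct, Fin.sum_univ_four, groverCoin] <;> ring

lemma lqwU4_groverState2 :
    lqwU4 groverCoin (groverState2 φ₁ φ₂ φ₃ φ₄) = groverState3 φ₁ φ₂ φ₃ φ₄ := by
  funext x
  simp only [lqwU4_apply, groverState2, groverState3, dlt]
  split_ifs <;> try omega
  all_goals ext i; fin_cases i <;> simp [dotProduct, Fin.sum_univ_four, groverCoin] <;> ring

lemma lqwU4_groverState3 :
    lqwU4 groverCoin (groverState3 φ₁ φ₂ φ₃ φ₄) = groverState0 φ₁ φ₂ φ₃ φ₄ := by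
  funext x
  simp only [lqwU4_apply, groverState3, groverState0, dlt]
  split_ifs <;> try omega
  all_goals ext i; fin_cases i <;> simp [dotProduct, Fin.sum_univ_four, groverCoin] <;> ring

lemma isPeriodicPt_lqwU4_groverState0 :
    IsPeriodicPt (lqwU4 groverCoin) 4 (groverState0 φ₁ φ₂ φ₃ φ₄) := by
  simp only [IsPeriodicPt, IsFixedPt, iterate_succ_apply', iterate_zero_apply,
    lqwU4_groverState0, lqwU4_groverState1, lqwU4_groverState2, lqwU4_groverState3]

lemma iterate_lqwU4_MtildeGrover {Δ : ℝ} {j : ℕ}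
    (hΔ : (Δ = π / 4 ∧ j = 0) ∨ (Δ = -3 * π / 4 ∧ j = 1)) (m k : ℕ) :
    (lqwU4 (MtildeGrover Δ))^[4 * m + k] (groverState0 φ₁ φ₂ φ₃ φ₄)
      = ((-1 : ℂ) ^ j) ^ k • (lqwU4 groverCoin)^[k] (groverState0 φ₁ φ₂ φ₃ φ₄) := by
  have hsign : ((-1 : ℂ) ^ j) ^ (4 * m) = 1 := by
    rw [pow_right_comm, Even.neg_one_pow ⟨2 * m, by ring⟩, one_pow]
  rw [MtildeGrover_eq_neg_one_pow_smul hΔ, iterate_lqwU4_smul_coin, pow_add, hsign, one_mul,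
    add_comm, iterate_add_apply, ((isPeriodicPt_lqwU4_groverState0 φ₁ φ₂ φ₃ φ₄).mul_const m).eq]

end Orbit

/-- Theorem 2(B): for `Δ = π/4` (`j = 0`) or `Δ = −3π/4` (`j = 1`), the quantum state of the
4-state walk with initial state `(φ₁,φ₂,φ₃,φ₄)ᵀδ₀(x)` is periodic with period 4, with the
explicit expressions at times `4m`, `4m+1`, `4m+2`, `4m+3`. -/
theorem grover_walk_period_four_states (Δ : ℝ) (j : ℕ)
    (hΔ : (Δ = π / 4 ∧ j = 0) ∨ (Δ = -3 * π / 4 ∧ j = 1))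
    (φ₁ φ₂ φ₃ φ₄ : ℂ) :
    ∀ (m : ℕ) (x : ℤ),
      ((lqwU4 (MtildeGrover Δ))^[4 * m]
          (fun z => if z = 0 then ![φ₁, φ₂, φ₃, φ₄] else 0)) x
        = dlt 0 x • ![φ₁, φ₂, φ₃, φ₄] ∧
      ((lqwU4 (MtildeGrover Δ))^[4 * m + 1]
          (fun z => if z = 0 then ![φ₁, φ₂, φ₃, φ₄] else 0)) x
        = ((-1) ^ j / 2 : ℂ) •
            (dlt (-1) x • ![φ₁ + φ₂ - φ₃ + φ₄, 0, φ₁ - φ₂ - φ₃ - φ₄, 0]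
              + dlt 1 x • ![0, φ₁ + φ₂ + φ₃ - φ₄, 0, -φ₁ + φ₂ - φ₃ - φ₄]) ∧
      ((lqwU4 (MtildeGrover Δ))^[4 * m + 2]
          (fun z => if z = 0 then ![φ₁, φ₂, φ₃, φ₄] else 0)) x
        = (1 / 2 : ℂ) •
            (dlt (-2) x • ![φ₂ + φ₄, 0, φ₂ + φ₄, 0]
              + dlt 0 x • ![φ₂ - φ₄, φ₁ - φ₃, φ₄ - φ₂, φ₃ - φ₁]
              + dlt 2 x • ![0, φ₁ + φ₃, 0, φ₁ + φ₃]) ∧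
      ((lqwU4 (MtildeGrover Δ))^[4 * m + 3]
          (fun z => if z = 0 then ![φ₁, φ₂, φ₃, φ₄] else 0)) x
        = ((-1) ^ j / 2 : ℂ) •
            (dlt (-1) x • ![φ₂ - φ₄, φ₂ + φ₄, φ₂ - φ₄, -φ₂ - φ₄]
              + dlt 1 x • ![φ₁ + φ₃, φ₁ - φ₃, -φ₁ - φ₃, φ₁ - φ₃]) := by
  intro m x
  have hinit : (fun z : ℤ => if z = 0 then ![φ₁, φ₂, φ₃, φ₄] else 0)
      = groverState0 φ₁ φ₂ φ₃ φ₄ := by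
    funext z
    by_cases hz : z = 0 <;> simp [groverState0, dlt, hz]
  have hj : ((-1 : ℂ) ^ j) ^ 2 = 1 := by
    rw [pow_right_comm, neg_one_sq, one_pow]
  have iter := iterate_lqwU4_MtildeGrover φ₁ φ₂ φ₃ φ₄ hΔ m
  rw [hinit]
  refine ⟨?_, ?_, ?_, ?_⟩
  · rw [← add_zero (4 * m), iter 0]
    simp [groverState0]
  · rw [iter 1]
    simp [lqwU4_groverState0, groverState1, div_eq_mul_inv, mul_assoc]
  · rw [iter 2]
    simp [lqwU4_groverState0, lqwU4_groverState1, groverState2, hj]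
  · rw [iter 3]
    simp [lqwU4_groverState0, lqwU4_groverState1, lqwU4_groverState2, groverState3,
      pow_succ, hj, div_eq_mul_inv, mul_assoc]

end
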